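/- arXiv:1511.03162 — 7 statements merged into one kernel-verified Lean document; each statement's English description precedes it below -/
import Mathlib

section
/- Let V be a 5-dimensional vector space over a field K, μ ∈ Λ²V, and α ∈ Λ⁴V. Then μ(μ^□, α) = 0, where μ(·,·) is the contraction into (Λ⁵V)^⊗2 and □ is the quadratic wedge-square map. -/
/-!
Alternating `u₀ ∧ ⋯ ∧ u₅ ↦ (u₁ ∧ ⋯ ∧ u₅) ⊗ φ u₀` over its six arguments gives an alternating
6-form on a 5-dimensional space, hence zero. For `u = (a, b, c, d, e, f)` this six-term relation,
after moving vectors past bivectors, says that the contractions of `c∧d∧e∧f`, `a∧b∧e∧f`, `a∧b∧c∧d`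
against `a∧b`, `c∧d`, `e∧f` sum to zero. Writing `μ = ∑ vᵢ ∧ wᵢ`, `μ(μ^□, α)` is a sum over `i` and
pairs `j < k`; terms with `i ∈ {j, k}` vanish and the others group by `{i, j, k}` into instances of
that cyclic relation.
-/

open ExteriorAlgebra TensorProduct

namespace ExteriorAlgebra

section CommRing

variable {R V M : Type*} [CommRing R] [AddCommGroup V] [Module R V] [AddCommGroup M] [Module R M]

lemma ι_mul_ι_anticomm (a b : V) : ι R a * ι R b = -(ι R b * ι R a) :=
  eq_neg_of_add_eq_zero_left (ι_add_mul_swap a b)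

lemma ι_mul_ι_mul_ι_self (a b : V) : ι R a * (ι R b * ι R a) = 0 := by
  rw [ι_mul_ι_anticomm b a, mul_neg, ← mul_assoc, ι_sq_zero, zero_mul, neg_zero]

lemma commute_ι_mul_ι_ι (a b c : V) : Commute (ι R a * ι R b) (ι R c) := by
  simp only [Commute, SemiconjBy, mul_assoc, ι_mul_ι_anticomm b c]
  rw [← mul_assoc (ι R c), ι_mul_ι_anticomm c a]
  noncomm_ring

lemma commute_ι_mul_ι_mul_ι_mul_ι (a b c d x : V) :
    Commute (ι R a * ι R b * ι R c * ι R d) (ι R x) := by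
  simpa only [mul_assoc] using (commute_ι_mul_ι_ι a b x).mul_left (commute_ι_mul_ι_ι c d x)

lemma ι_mul_ι_mul_ι_mul_ι_swap (a b c d : V) :
    ι R a * ι R b * ι R c * ι R d = ι R c * ι R d * ι R a * ι R b := by
  simpa only [mul_assoc] using
    ((commute_ι_mul_ι_ι a b c).mul_right (commute_ι_mul_ι_ι a b d)).eq

lemma exists_eq_sum_ι_mul_ι {μ : ExteriorAlgebra R V}
    (hμ : μ ∈ LinearMap.range (ι R : V →ₗ[R] ExteriorAlgebra R V) ^ 2) :
    ∃ n, ∃ v w : Fin n → V, μ = ∑ i, ι R (v i) * ι R (w i) := by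
  rw [pow_two] at hμ
  refine Submodule.mul_induction_on hμ ?_ ?_
  · rintro _ ⟨a, rfl⟩ _ ⟨b, rfl⟩
    exact ⟨1, fun _ => a, fun _ => b, by simp⟩
  · rintro _ _ ⟨n₁, v₁, w₁, rfl⟩ ⟨n₂, v₂, w₂, rfl⟩
    exact ⟨n₁ + n₂, Fin.append v₁ v₂, Fin.append w₁ w₂, by simp [Fin.sum_univ_add]⟩

def ιMultiTMul (n : ℕ) (φ : V →ₗ[R] M) :
    V →ₗ[R] V [⋀^Fin n]→ₗ[R] ExteriorAlgebra R V ⊗[R] M where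
  toFun x := ((TensorProduct.mk R _ M).flip (φ x)).compAlternatingMap (ιMulti R n)
  map_add' x y := by ext; simp
  map_smul' c x := by ext; simp

@[simp]
lemma ιMultiTMul_apply (n : ℕ) (φ : V →ₗ[R] M) (x : V) (u : Fin n → V) :
    ιMultiTMul n φ x u = ιMulti R n u ⊗ₜ φ x :=
  rfl

/-- The paper's contraction `μ(x, β)` for `μ = v ∧ w`, with `β ∧ ·` replaced by any linear `φ`. -/
def contractTerm (φ : V →ₗ[R] M) (x : ExteriorAlgebra R V) (v w : V) :
    ExteriorAlgebra R V ⊗[R] M :=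
  (x * ι R v) ⊗ₜ φ w - (x * ι R w) ⊗ₜ φ v

lemma contractTerm_eq_zero_of_right (φ : V →ₗ[R] M) (a b c d : V) :
    contractTerm φ (ι R a * ι R b * ι R c * ι R d) c d = 0 := by
  simp only [contractTerm, mul_assoc, ι_mul_ι_mul_ι_self, ι_sq_zero, mul_zero, zero_tmul, sub_self]

lemma contractTerm_eq_zero_of_left (φ : V →ₗ[R] M) (a b c d : V) :
    contractTerm φ (ι R a * ι R b * ι R c * ι R d) a b = 0 := by
  rw [ι_mul_ι_mul_ι_mul_ι_swap, contractTerm_eq_zero_of_right]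

end CommRing

section Field

variable {K V M : Type*} [Field K] [AddCommGroup V] [Module K V] [AddCommGroup M] [Module K M]
  [FiniteDimensional K V]

theorem sum_neg_one_pow_ιMulti_removeNth_tmul_eq_zero {n : ℕ} (h : Module.finrank K V ≤ n)
    (φ : V →ₗ[K] M) (u : Fin (n + 1) → V) :
    ∑ l : Fin (n + 1), (-1 : ℤ) ^ (l : ℕ) • (ιMulti K n (Fin.removeNth l u) ⊗ₜ[K] φ (u l)) = 0 := by
  have := (AlternatingMap.alternatizeUncurryFin (ιMultiTMul n φ)).map_linearDependent u
    fun hu => by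
      have := hu.fintype_card_le_finrank
      simp only [Fintype.card_fin] at this
      omega
  simpa [AlternatingMap.alternatizeUncurryFin_apply] using this

theorem contractTerm_cyclic (h : Module.finrank K V ≤ 5) (φ : V →ₗ[K] M) (a b c d e f : V) :
    contractTerm φ (ι K c * ι K d * ι K e * ι K f) a b
      + contractTerm φ (ι K a * ι K b * ι K e * ι K f) c d
      + contractTerm φ (ι K a * ι K b * ι K c * ι K d) e f = 0 := by
  have key : (ι K b * ι K c * ι K d * ι K e * ι K f) ⊗ₜ[K] φ a
      - (ι K a * ι K c * ι K d * ι K e * ι K f) ⊗ₜ[K] φ b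
      + (ι K a * ι K b * ι K d * ι K e * ι K f) ⊗ₜ[K] φ c
      - (ι K a * ι K b * ι K c * ι K e * ι K f) ⊗ₜ[K] φ d
      + (ι K a * ι K b * ι K c * ι K d * ι K f) ⊗ₜ[K] φ e
      - (ι K a * ι K b * ι K c * ι K d * ι K e) ⊗ₜ[K] φ f = 0 := by
    have := sum_neg_one_pow_ιMulti_removeNth_tmul_eq_zero h φ ![a, b, c, d, e, f]
    simp only [Fin.sum_univ_succ, Fin.sum_univ_zero, ιMulti_apply, List.ofFn_succ, List.ofFn_zero,
      List.prod_cons, List.prod_nil, Fin.removeNth_apply] at this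
    simpa [Fin.succAbove, mul_assoc, sub_eq_add_neg, add_assoc] using this
  have hcdef := fun x => (commute_ι_mul_ι_mul_ι_mul_ι (R := K) c d e f x).eq
  have hef := fun x => (commute_ι_mul_ι_ι (R := K) e f x).eq
  simp only [mul_assoc] at hcdef hef
  rw [← neg_eq_zero, ← key]
  simp only [contractTerm, mul_assoc]
  simp only [hcdef]
  simp only [hef]
  abel

end Field

end ExteriorAlgebra

namespace Finset

theorem sum_sum_sum_Ioi_eq_zero {ι M : Type*} [Fintype ι] [LinearOrder ι] [LocallyFiniteOrder ι]
    [LocallyFiniteOrderTop ι] [LocallyFiniteOrderBot ι] [AddCommMonoid M] (T : ι → ι → ι → M)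
    (hleft : ∀ j k, T j k j = 0) (hright : ∀ j k, T j k k = 0)
    (hcyc : ∀ a b c, a < b → b < c → T b c a + T a c b + T a b c = 0) :
    ∑ i, ∑ j, ∑ k ∈ Ioi j, T j k i = 0 := by
  have hsplit : ∀ j, ∀ k ∈ Ioi j, ∑ i, T j k i =
      ∑ i ∈ Iio j, T j k i + ∑ i ∈ Ioo j k, T j k i + ∑ i ∈ Ioi k, T j k i := by
    intro j k hjk
    rw [mem_Ioi] at hjk
    rw [← sum_union, ← sum_union]
    · refine (sum_subset (subset_univ _) fun i _ hi => ?_).symm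
      simp only [mem_union, mem_Iio, mem_Ioo, mem_Ioi, not_or, not_and, not_lt] at hi
      obtain ⟨⟨hji, hik⟩, hki⟩ := hi
      rcases hji.eq_or_lt with rfl | hji
      · exact hleft _ _
      · obtain rfl := le_antisymm hki (hik hji)
        exact hright _ _
    · exact disjoint_left.2 fun i hi hi' => by
        simp only [mem_union, mem_Iio, mem_Ioo, mem_Ioi] at hi hi'
        rcases hi with hi | hi <;> order
    · exact disjoint_left.2 fun i hi hi' => by
        simp only [mem_Iio, mem_Ioo] at hi hi'
        order
  have hA : ∑ j, ∑ k ∈ Ioi j, ∑ i ∈ Iio j, T j k i = ∑ a, ∑ b ∈ Ioi a, ∑ c ∈ Ioi b, T b c a := by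
    simp_rw [sum_comm (s := Ioi _) (t := Iio _)]
    exact sum_comm' fun j i => by simp
  have hB : ∑ j, ∑ k ∈ Ioi j, ∑ i ∈ Ioo j k, T j k i = ∑ a, ∑ b ∈ Ioi a, ∑ c ∈ Ioi b, T a c b :=
    sum_congr rfl fun j _ => sum_comm' fun k i => by
      simp only [mem_Ioi, mem_Ioo]
      exact ⟨fun ⟨_, hji, hik⟩ => ⟨hik, hji⟩, fun ⟨hik, hji⟩ => ⟨hji.trans hik, hji, hik⟩⟩
  calc ∑ i, ∑ j, ∑ k ∈ Ioi j, T j k i = ∑ j, ∑ k ∈ Ioi j, ∑ i, T j k i := by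
        rw [sum_comm]; exact sum_congr rfl fun j _ => sum_comm
    _ = ∑ a, ∑ b ∈ Ioi a, ∑ c ∈ Ioi b, (T b c a + T a c b + T a b c) := by
        simp only [sum_congr rfl fun j _ => sum_congr rfl (hsplit j), sum_add_distrib, hA, hB]
    _ = 0 := sum_eq_zero fun a _ => sum_eq_zero fun b hb => sum_eq_zero fun c hc =>
        hcyc a b c (mem_Ioi.1 hb) (mem_Ioi.1 hc)

end Finset

theorem stmt_5_general (K : Type*) [Field K] (V : Type*) [AddCommGroup V] [Module K V]
    (hdim : Module.finrank K V = 5)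
    (sq : ExteriorAlgebra K V → ExteriorAlgebra K V)
    (hsq : ∀ (n : ℕ) (v w : Fin n → V),
      sq (∑ i, ι K (v i) * ι K (w i))
        = ∑ i, ∑ j ∈ Finset.Ioi i, ι K (v i) * ι K (w i) * ι K (v j) * ι K (w j))
    (C : ExteriorAlgebra K V → ExteriorAlgebra K V → ExteriorAlgebra K V →
      ExteriorAlgebra K V ⊗[K] ExteriorAlgebra K V)
    (hC : ∀ (n : ℕ) (v w : Fin n → V) (α β : ExteriorAlgebra K V),
      C (∑ i, ι K (v i) * ι K (w i)) α β
        = ∑ i, ((α * ι K (v i)) ⊗ₜ[K] (β * ι K (w i))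
            - (α * ι K (w i)) ⊗ₜ[K] (β * ι K (v i))))
    (μ α : ExteriorAlgebra K V)
    (hμ : μ ∈ (LinearMap.range (ι K : V →ₗ[K] ExteriorAlgebra K V)) ^ 2) :
    C μ (sq μ) α = 0 := by
  have : FiniteDimensional K V := Module.finite_of_finrank_eq_succ hdim
  obtain ⟨n, v, w, rfl⟩ := exists_eq_sum_ι_mul_ι hμ
  rw [hsq, hC]
  simp only [Finset.sum_mul, sum_tmul, ← Finset.sum_sub_distrib]
  exact Finset.sum_sum_sum_Ioi_eq_zero
    (fun j k i => contractTerm (LinearMap.mulLeft K α ∘ₗ ι K)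
      (ι K (v j) * ι K (w j) * ι K (v k) * ι K (w k)) (v i) (w i))
    (fun _ _ => contractTerm_eq_zero_of_left _ _ _ _ _)
    (fun _ _ => contractTerm_eq_zero_of_right _ _ _ _ _)
    (fun a b c _ _ => contractTerm_cyclic hdim.le _ _ _ _ _ _ _)

/-- For a 5-dimensional vector space `V` over `K`, `μ ∈ Λ²V` and
`α ∈ Λ⁴V`, one has `μ(μ^□, α) = 0`, where `μ(·,·)` is the contraction into
`(Λ⁵V)^⊗2` and `□` is the quadratic wedge-square map. -/
theorem stmt_5 (K : Type*) [Field K] (V : Type*) [AddCommGroup V] [Module K V]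
    (hdim : Module.finrank K V = 5)
    (sq : ExteriorAlgebra K V → ExteriorAlgebra K V)
    (hsq : ∀ (n : ℕ) (v w : Fin n → V),
      sq (∑ i, ι K (v i) * ι K (w i))
        = ∑ i, ∑ j ∈ Finset.Ioi i, ι K (v i) * ι K (w i) * ι K (v j) * ι K (w j))
    (C : ExteriorAlgebra K V → ExteriorAlgebra K V → ExteriorAlgebra K V →
      ExteriorAlgebra K V ⊗[K] ExteriorAlgebra K V)
    (hC : ∀ (n : ℕ) (v w : Fin n → V) (α β : ExteriorAlgebra K V),
      C (∑ i, ι K (v i) * ι K (w i)) α β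
        = ∑ i, ((α * ι K (v i)) ⊗ₜ[K] (β * ι K (w i))
            - (α * ι K (w i)) ⊗ₜ[K] (β * ι K (v i))))
    (μ α : ExteriorAlgebra K V)
    (hμ : μ ∈ (LinearMap.range (ι K : V →ₗ[K] ExteriorAlgebra K V)) ^ 2)
    (hα : α ∈ (LinearMap.range (ι K : V →ₗ[K] ExteriorAlgebra K V)) ^ 4) :
    C μ (sq μ) α = 0 :=
  stmt_5_general K V hdim sq hsq C hC μ α hμ
end

section
/- Let V be a 5-dimensional vector space over a field K and μ, ν, ξ ∈ Λ²V. Then ν(μ^□, μ ∧ ξ) = −ξ(μ^□, μ ∧ ν), where μ(·,·) denotes the contraction of Λ²V against two elements of Λ⁴V landing in (Λ⁵V)^⊗2, and □ is the quadratic wedge-square map Λ²V → Λ⁴V. -/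
/-! In dimension `5` every product of six vectors vanishes. Applying the `(1, 5)`-component of the
coproduct of `ΛV` to such a product gives the six-term syzygy
`∑ᵢ (-1)ⁱ⁻¹ f(xᵢ) ⊗ x₁ ∧ ⋯ x̂ᵢ ⋯ ∧ x₆ = 0`. For `ν = a ∧ b`, `ξ = c ∧ d` and `μ = ∑ₖ pₖ ∧ qₖ`,
the sum over `k` of the syzygies for `(pₖ, qₖ, a, b, c, d)` with `f = μ^□ ∧ ·` is the claim plus
the contraction `μ(μ^□, a ∧ b ∧ c ∧ d)`. That contraction vanishes: expanding
`μ^□ = ∑_{u < v} (pᵤ ∧ qᵤ) ∧ (pᵥ ∧ qᵥ)`, its terms regroup over triples `u < v < w` into the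
syzygies for `(pᵤ, qᵤ, pᵥ, qᵥ, p_w, q_w)`. The general case follows by bilinearity in `ν` and `ξ`.
-/

open ExteriorAlgebra TensorProduct

section Combinatorics
variable {M : Type*} [AddCommGroup M] {α : Type*} [LinearOrder α]

theorem ite_lt_eq_add_add (F : α → α → α → M) (hu : ∀ u v, F u v u = 0)
    (hv : ∀ u v, F u v v = 0) (u v w : α) :
    (if u < v then F u v w else 0) = (if u < v ∧ v < w then F u v w else 0)
      + (if u < w ∧ w < v then F u v w else 0) + (if w < u ∧ u < v then F u v w else 0) := by
  rcases lt_trichotomy w u with hwu | rfl | hwu <;> rcases lt_trichotomy w v with hwv | rfl | hwv <;>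
    split_ifs <;> simp_all <;> order

theorem sum_Ioi_sum_eq_sum_Ioi_sum_Ioi [Fintype α] [LocallyFiniteOrderTop α] (F : α → α → α → M)
    (hu : ∀ u v, F u v u = 0) (hv : ∀ u v, F u v v = 0) :
    ∑ u, ∑ v ∈ Finset.Ioi u, ∑ w, F u v w
      = ∑ u, ∑ v ∈ Finset.Ioi u, ∑ w ∈ Finset.Ioi v, (F u v w + F u w v + F v w u) := by
  simp only [← Finset.filter_lt_eq_Ioi, Finset.sum_filter, Finset.ite_sum_zero, ← ite_and,
    Finset.sum_add_distrib]
  have h₂ : (∑ u, ∑ v, ∑ w, if u < v ∧ v < w then F u w v else 0)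
      = ∑ u, ∑ v, ∑ w, if u < w ∧ w < v then F u v w else 0 :=
    Finset.sum_congr rfl fun _ _ => Finset.sum_comm
  have h₃ : (∑ u, ∑ v, ∑ w, if u < v ∧ v < w then F v w u else 0)
      = ∑ u, ∑ v, ∑ w, if w < u ∧ u < v then F u v w else 0 := by
    rw [Finset.sum_comm]
    exact Finset.sum_congr rfl fun _ _ => Finset.sum_comm
  rw [h₂, h₃]
  simp only [← Finset.sum_add_distrib, ite_lt_eq_add_add F hu hv]

end Combinatorics

namespace ExteriorAlgebra

section CommRing
variable {R : Type*} [CommRing R] {M : Type*} [AddCommGroup M] [Module R M]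

theorem ι_mul_ι_mul_swap (x y : M) (X : ExteriorAlgebra R M) :
    ι R x * (ι R y * X) = -(ι R y * (ι R x * X)) := by
  rw [← mul_assoc, ← mul_assoc, eq_neg_of_add_eq_zero_left (ι_add_mul_swap x y), neg_mul]

theorem ι_mul_ι_mul_ι_mul (x y z : M) (X : ExteriorAlgebra R M) :
    ι R x * (ι R y * (ι R z * X)) = ι R z * (ι R x * (ι R y * X)) := by
  rw [ι_mul_ι_mul_swap y z, mul_neg, ι_mul_ι_mul_swap x z, neg_neg]

theorem ι_mul_ι_mul_ι (x y z : M) : ι R x * (ι R y * ι R z) = ι R z * (ι R x * ι R y) := by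
  simpa using ι_mul_ι_mul_ι_mul (R := R) x y z 1

theorem ι_mul_ι_mul_self (x : M) (X : ExteriorAlgebra R M) : ι R x * (ι R x * X) = 0 := by
  rw [← mul_assoc, ι_sq_zero, zero_mul]

theorem ι_mul_ι_mul_ι_mul_self (x y : M) (X : ExteriorAlgebra R M) :
    ι R x * (ι R y * (ι R x * X)) = 0 := by
  rw [ι_mul_ι_mul_swap y x, mul_neg, ι_mul_ι_mul_self, neg_zero]

theorem exists_eq_sum_ι_mul_ι_of_mem_sq {x : ExteriorAlgebra R M}
    (hx : x ∈ LinearMap.range (ι R : M →ₗ[R] ExteriorAlgebra R M) ^ 2) :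
    ∃ (n : ℕ) (v w : Fin n → M), x = ∑ i, ι R (v i) * ι R (w i) := by
  rw [pow_two] at hx
  refine Submodule.mul_induction_on hx ?_ ?_
  · rintro _ ⟨v, rfl⟩ _ ⟨w, rfl⟩
    exact ⟨1, ![v], ![w], by simp⟩
  · rintro _ _ ⟨n₁, v₁, w₁, rfl⟩ ⟨n₂, v₂, w₂, rfl⟩
    refine ⟨n₁ + n₂, Fin.append v₁ v₂, Fin.append w₁ w₂, ?_⟩
    simp [Fin.sum_univ_add]

variable {κ : Type*} [Fintype κ] (b : Module.Basis κ R M) {E : Type*} [AddCommGroup E]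
  [Module R E] (f : M →ₗ[R] E)

/-- The `(1, k - 1)`-component of the coproduct of `ΛM` followed by `f` on the first factor,
`x₁ ∧ ⋯ ∧ xₖ ↦ ∑ᵢ (-1)ⁱ⁻¹ f(xᵢ) ⊗ x₁ ∧ ⋯ x̂ᵢ ⋯ ∧ xₖ`, written with the dual basis of `b`. -/
noncomputable def coprodOne : ExteriorAlgebra R M →ₗ[R] E ⊗[R] ExteriorAlgebra R M :=
  ∑ s, (TensorProduct.mk R E _ (f (b s))).comp (CliffordAlgebra.contractLeft (b.coord s))

theorem coprodOne_one : coprodOne b f 1 = 0 := by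
  simp [coprodOne]

theorem coprodOne_ι_mul (x : M) (X : ExteriorAlgebra R M) :
    coprodOne b f (ι R x * X)
      = f x ⊗ₜ X - LinearMap.lTensor E (LinearMap.mulLeft R (ι R x)) (coprodOne b f X) := by
  have hx : ∑ s, f (b s) ⊗ₜ[R] (b.coord s x • X) = f x ⊗ₜ X := by
    simp only [← smul_tmul, ← sum_tmul, ← map_smul, ← map_sum, Module.Basis.coord_apply,
      b.sum_repr]
  simp only [coprodOne, LinearMap.sum_apply, LinearMap.comp_apply, mk_apply,
    CliffordAlgebra.contractLeft_ι_mul, tmul_sub, Finset.sum_sub_distrib, map_sum,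
    LinearMap.lTensor_tmul, LinearMap.mulLeft_apply, hx]

theorem coprodOne_ι (x : M) : coprodOne b f (ι R x) = f x ⊗ₜ 1 := by
  rw [← mul_one (ι R x), coprodOne_ι_mul, coprodOne_one, map_zero, sub_zero]

end CommRing

section FiniteDimensional
variable {K : Type*} [Field K] {V : Type*} [AddCommGroup V] [Module K V] [Module.Finite K V]

theorem ιMulti_eq_zero_of_finrank_lt {n : ℕ} (hn : Module.finrank K V < n) (v : Fin n → V) :
    ιMulti K n v = 0 :=
  AlternatingMap.map_linearDependent _ v fun hv =>
    (hn.trans_le (by simpa using hv.fintype_card_le_finrank)).false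

theorem ι_mul_six_eq_zero (hV : Module.finrank K V ≤ 5) (x₁ x₂ x₃ x₄ x₅ x₆ : V) :
    ι K x₁ * (ι K x₂ * (ι K x₃ * (ι K x₄ * (ι K x₅ * ι K x₆)))) = 0 := by
  simpa [ιMulti_succ_apply, ιMulti_zero_apply] using
    ιMulti_eq_zero_of_finrank_lt (Nat.lt_succ_of_le hV) ![x₁, x₂, x₃, x₄, x₅, x₆]

theorem syzygy_six {E : Type*} [AddCommGroup E] [Module K E] (hV : Module.finrank K V ≤ 5)
    (f : V →ₗ[K] E) (x₁ x₂ x₃ x₄ x₅ x₆ : V) :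
    f x₁ ⊗ₜ[K] (ι K x₂ * (ι K x₃ * (ι K x₄ * (ι K x₅ * ι K x₆))))
      - f x₂ ⊗ₜ[K] (ι K x₁ * (ι K x₃ * (ι K x₄ * (ι K x₅ * ι K x₆))))
      + f x₃ ⊗ₜ[K] (ι K x₁ * (ι K x₂ * (ι K x₄ * (ι K x₅ * ι K x₆))))
      - f x₄ ⊗ₜ[K] (ι K x₁ * (ι K x₂ * (ι K x₃ * (ι K x₅ * ι K x₆))))
      + f x₅ ⊗ₜ[K] (ι K x₁ * (ι K x₂ * (ι K x₃ * (ι K x₄ * ι K x₆))))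
      - f x₆ ⊗ₜ[K] (ι K x₁ * (ι K x₂ * (ι K x₃ * (ι K x₄ * ι K x₅)))) = 0 := by
  have h := congrArg (coprodOne (Module.Free.chooseBasis K V) f)
    (ι_mul_six_eq_zero hV x₁ x₂ x₃ x₄ x₅ x₆)
  simp only [coprodOne_ι_mul, coprodOne_ι, map_sub, map_zero, LinearMap.lTensor_tmul,
    LinearMap.mulLeft_apply, mul_one] at h
  rw [← h]
  abel

end FiniteDimensional

section WedgeSquare
variable {R : Type*} [CommRing R] {M : Type*} [AddCommGroup M] [Module R M]

/-- `μ^□` for `μ = ∑ₖ pₖ ∧ qₖ`. -/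
def wedgeSq {m : ℕ} (p q : Fin m → M) : ExteriorAlgebra R M :=
  ∑ u, ∑ v ∈ Finset.Ioi u, ι R (p u) * ι R (q u) * ι R (p v) * ι R (q v)

variable {K : Type*} [Field K] {V : Type*} [AddCommGroup V] [Module K V] [Module.Finite K V]

theorem sum_wedgeSq_mul_ι_tmul_sub_eq_zero (hV : Module.finrank K V ≤ 5) {m : ℕ}
    (p q : Fin m → V) (G : ExteriorAlgebra K V) :
    ∑ k, ((wedgeSq p q * ι K (p k)) ⊗ₜ[K] (ι K (q k) * G)
      - (wedgeSq p q * ι K (q k)) ⊗ₜ[K] (ι K (p k) * G)) = 0 := by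
  set F : Fin m → Fin m → Fin m → ExteriorAlgebra K V ⊗[K] ExteriorAlgebra K V := fun u v k =>
    (ι K (p u) * (ι K (q u) * (ι K (p v) * (ι K (q v) * ι K (p k))))) ⊗ₜ (ι K (q k) * G)
      - (ι K (p u) * (ι K (q u) * (ι K (p v) * (ι K (q v) * ι K (q k))))) ⊗ₜ (ι K (p k) * G)
    with hF
  have hu : ∀ u v, F u v u = 0 := fun u v => by
    simp [hF, ι_mul_ι_mul_ι (p v) (q v), ι_mul_ι_mul_self, ι_mul_ι_mul_ι_mul_self]
  have hv : ∀ u v, F u v v = 0 := fun u v => by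
    simp [hF, ι_mul_ι_mul_ι (p v) (q v), ι_mul_ι_mul_self]
  have hcyc : ∀ u v w, F u v w + F u w v + F v w u = 0 := fun u v w => by
    have h := congrArg (TensorProduct.comm K _ _) (syzygy_six hV
      ((LinearMap.mulRight K G).comp (ι K)) (p u) (q u) (p v) (q v) (p w) (q w))
    simp only [map_sub, map_add, map_zero, comm_tmul, LinearMap.comp_apply,
      LinearMap.mulRight_apply] at h
    simp only [hF]
    rw [ι_mul_ι_mul_ι (p w) (q w) (p v), ι_mul_ι_mul_ι (p w) (q w) (q v),
      ι_mul_ι_mul_ι (p w) (q w) (p u), ι_mul_ι_mul_ι (p w) (q w) (q u),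
      ι_mul_ι_mul_ι_mul (p v) (q v) (p u), ι_mul_ι_mul_ι_mul (p v) (q v) (q u)]
    linear_combination (norm := skip) -h
    abel
  calc _ = ∑ u, ∑ v ∈ Finset.Ioi u, ∑ k, F u v k := by
        simp only [hF, wedgeSq, Finset.sum_mul, sum_tmul, mul_assoc, ← Finset.sum_sub_distrib]
        rw [Finset.sum_comm]
        exact Finset.sum_congr rfl fun _ _ => Finset.sum_comm
    _ = 0 := by
        rw [sum_Ioi_sum_eq_sum_Ioi_sum_Ioi F hu hv]
        exact Finset.sum_eq_zero fun u _ => Finset.sum_eq_zero fun v _ =>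
          Finset.sum_eq_zero fun w _ => hcyc u v w

theorem wedgeSq_tmul_add_wedgeSq_tmul_eq_zero (hV : Module.finrank K V ≤ 5) {m : ℕ}
    (p q : Fin m → V) (a b c d : V) :
    (wedgeSq p q * ι K a) ⊗ₜ[K] ((∑ k, ι K (p k) * ι K (q k)) * (ι K c * ι K d) * ι K b)
      - (wedgeSq p q * ι K b) ⊗ₜ[K] ((∑ k, ι K (p k) * ι K (q k)) * (ι K c * ι K d) * ι K a)
      + ((wedgeSq p q * ι K c) ⊗ₜ[K] ((∑ k, ι K (p k) * ι K (q k)) * (ι K a * ι K b) * ι K d)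
      - (wedgeSq p q * ι K d) ⊗ₜ[K] ((∑ k, ι K (p k) * ι K (q k)) * (ι K a * ι K b) * ι K c))
      = 0 := by
  have hsyz := Finset.sum_eq_zero fun k (_ : k ∈ Finset.univ) => syzygy_six hV
    ((LinearMap.mulLeft K (wedgeSq p q)).comp (ι K)) (p k) (q k) a b c d
  have hcontr := sum_wedgeSq_mul_ι_tmul_sub_eq_zero hV p q (ι K a * (ι K b * (ι K c * ι K d)))
  simp only [mul_assoc, ι_mul_ι_mul_ι c d, Finset.sum_mul, tmul_sum]
  linear_combination (norm := skip) hsyz - hcontr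
  simp only [LinearMap.comp_apply, LinearMap.mulLeft_apply, Finset.sum_add_distrib,
    Finset.sum_sub_distrib]
  abel

end WedgeSquare

end ExteriorAlgebra

/-- For a 5-dimensional vector space `V` over `K` and
`μ, ν, ξ ∈ Λ²V`, one has `ν(μ^□, μ ∧ ξ) = −ξ(μ^□, μ ∧ ν)`, where `μ(·,·)` is the
contraction of `Λ²V` against two elements of `Λ⁴V` landing in `(Λ⁵V)^⊗2` and
`□` is the quadratic wedge-square map. -/
theorem stmt_6 (K : Type*) [Field K] (V : Type*) [AddCommGroup V] [Module K V]
    (hdim : Module.finrank K V = 5)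
    (sq : ExteriorAlgebra K V → ExteriorAlgebra K V)
    (hsq : ∀ (n : ℕ) (v w : Fin n → V),
      sq (∑ i, ι K (v i) * ι K (w i))
        = ∑ i, ∑ j ∈ Finset.Ioi i, ι K (v i) * ι K (w i) * ι K (v j) * ι K (w j))
    (C : ExteriorAlgebra K V → ExteriorAlgebra K V → ExteriorAlgebra K V →
      ExteriorAlgebra K V ⊗[K] ExteriorAlgebra K V)
    (hC : ∀ (n : ℕ) (v w : Fin n → V) (α β : ExteriorAlgebra K V),
      C (∑ i, ι K (v i) * ι K (w i)) α β
        = ∑ i, ((α * ι K (v i)) ⊗ₜ[K] (β * ι K (w i))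
            - (α * ι K (w i)) ⊗ₜ[K] (β * ι K (v i))))
    (μ ν ξ : ExteriorAlgebra K V)
    (hμ : μ ∈ (LinearMap.range (ι K : V →ₗ[K] ExteriorAlgebra K V)) ^ 2)
    (hν : ν ∈ (LinearMap.range (ι K : V →ₗ[K] ExteriorAlgebra K V)) ^ 2)
    (hξ : ξ ∈ (LinearMap.range (ι K : V →ₗ[K] ExteriorAlgebra K V)) ^ 2) :
    C ν (sq μ) (μ * ξ) = - C ξ (sq μ) (μ * ν) := by
  have : Module.Finite K V := Module.finite_of_finrank_eq_succ hdim
  obtain ⟨m, p, q, rfl⟩ := exists_eq_sum_ι_mul_ι_of_mem_sq hμ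
  obtain ⟨n, a, b, rfl⟩ := exists_eq_sum_ι_mul_ι_of_mem_sq hν
  obtain ⟨r, c, d, rfl⟩ := exists_eq_sum_ι_mul_ι_of_mem_sq hξ
  set μ := ∑ k, ι K (p k) * ι K (q k)
  have hsqμ : sq μ = wedgeSq p q := hsq m p q
  rw [hC, hC, hsqμ, eq_neg_iff_add_eq_zero]
  simp only [Finset.mul_sum, Finset.sum_mul, tmul_sum, ← Finset.sum_sub_distrib]
  rw [Finset.sum_comm (s := Finset.univ (α := Fin r)), ← Finset.sum_add_distrib]
  refine Finset.sum_eq_zero fun i _ => ?_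
  rw [← Finset.sum_add_distrib]
  exact Finset.sum_eq_zero fun j _ =>
    wedgeSq_tmul_add_wedgeSq_tmul_eq_zero hdim.le p q (a i) (b i) (c j) (d j)
end

section
/- Let Q be a quintic algebra over a field K with quotient L = Q/K (a 4-dimensional space), and define the five-variable form F(a,b,c,d,e) = (a∧b∧c∧bc)(a∧d∧e∧de) + (a∧b∧d∧bd)(a∧e∧c∧ec) + (a∧b∧e∧be)(a∧c∧d∧cd), valued in (Λ⁴L)^⊗2, where each product like bc is computed in Q and projected to L. If Q is very degenerate (i.e., there exist subspaces Q₄ ⊆ Q₃ ⊆ Q with dim Q₄ = 4, dim Q₃ = 3 and Q₄·Q₃ = 0), then F is identically zero. -/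
open ExteriorAlgebra TensorProduct

/-!
Write `Q = K·1 ⊕ Q₃ ⊕ K·v` with `v ∈ Q₄ \ Q₃`. Since `Q₄·Q₃ = 0`, the product `xy` is
`kₓ y + k_y x + ξₓξ_y v²` modulo `K·1`, so in `a∧b∧c∧bc` only the `v²`-part survives and
`a∧b∧c∧bc = ξ_bξ_c · (a∧b∧c∧w)` with `w` the image of `v²`. All three summands of `F` thus
carry the common factor `ξ_bξ_cξ_dξ_e`, and what remains is a Plücker relation: on the
four-dimensional space `L`, `(x, y) ↦ a∧x∧y∧w` is an alternating form of rank at most two,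
so its Pfaffian vanishes.
-/

theorem Matrix.det_fin_four_plucker {R : Type*} [CommRing R] (a w x y z t : Fin 4 → R) :
    (Matrix.of ![a, x, y, w]).det * (Matrix.of ![a, z, t, w]).det
      + (Matrix.of ![a, x, z, w]).det * (Matrix.of ![a, t, y, w]).det
      + (Matrix.of ![a, x, t, w]).det * (Matrix.of ![a, y, z, w]).det = 0 := by
  simp [Matrix.det_succ_row_zero, Fin.sum_univ_succ, Fin.succAbove]
  ring

section Alternating

variable {R M N : Type*} [CommRing R] [AddCommGroup M] [Module R M] [AddCommGroup N] [Module R N]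

theorem Module.Basis.det_fin_four (e : Module.Basis (Fin 4) R M) (p q r s : M) :
    e.det ![p, q, r, s] = (Matrix.of ![⇑(e.repr p), e.repr q, e.repr r, e.repr s]).det := by
  rw [e.det_apply, ← Matrix.det_transpose]
  congr 1
  ext i j
  fin_cases i <;> rfl

theorem AlternatingMap.apply_eq_det_smul {ι : Type*} [Fintype ι] [DecidableEq ι]
    (f : M [⋀^ι]→ₗ[R] N) (e : Module.Basis ι R M) (v : ι → M) : f v = e.det v • f e := by
  suffices f = e.det.smulRight (f e) from congr($this v)
  refine e.ext_alternating fun i hi => ?_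
  let σ : Equiv.Perm ι := Equiv.ofBijective i (Finite.injective_iff_bijective.1 hi)
  change f (e ∘ σ) = e.det (e ∘ σ) • f e
  simp [AlternatingMap.map_perm, Module.Basis.det_self]

theorem AlternatingMap.plucker_fin_four (f : M [⋀^Fin 4]→ₗ[R] N) (e : Module.Basis (Fin 4) R M)
    (a w x y z t : M) :
    f ![a, x, y, w] ⊗ₜ[R] f ![a, z, t, w] + f ![a, x, z, w] ⊗ₜ[R] f ![a, t, y, w]
      + f ![a, x, t, w] ⊗ₜ[R] f ![a, y, z, w] = 0 := by
  -- instantiated at `vecCons _ _` so that `f e` on the right is not rewritten again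
  simp only [f.apply_eq_det_smul e (Matrix.vecCons _ _), smul_tmul_smul, e.det_fin_four,
    ← add_smul, Matrix.det_fin_four_plucker, zero_smul]

end Alternating

namespace ExteriorAlgebra

variable {R M : Type*} [CommRing R] [AddCommGroup M] [Module R M]

theorem ιMulti_fin_four (p q r s : M) :
    ιMulti R 4 ![p, q, r, s] = ι R p * ι R q * ι R r * ι R s := by
  simp [ιMulti_apply, mul_assoc]

theorem ι_mul_ι_mul_ι_mul_ι_add_smul (z x y w : M) (α β γ : R) :
    ι R z * ι R x * ι R y * ι R (α • y + β • x + γ • w) = γ • (ι R z * ι R x * ι R y * ι R w) := by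
  have hy : ι R z * ι R x * ι R y * ι R y = 0 := by rw [mul_assoc, ι_sq_zero, mul_zero]
  have hx : ι R z * ι R x * ι R y * ι R x = 0 := by
    rw [← ιMulti_fin_four]
    exact AlternatingMap.map_eq_zero_of_eq _ _ (i := 1) (j := 3) rfl (by decide)
  simp only [map_add, map_smul, mul_add, mul_smul_comm, hx, hy, smul_zero, zero_add]

end ExteriorAlgebra

theorem Submodule.sup_span_singleton_eq_of_finrank_eq_succ {K V : Type*} [DivisionRing K]
    [AddCommGroup V] [Module K V] [Module.Finite K V] {p q : Submodule K V} {v : V}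
    (hpq : p ≤ q) (hq : Module.finrank K q = Module.finrank K p + 1) (hvq : v ∈ q) (hvp : v ∉ p) :
    p ⊔ Submodule.span K {v} = q :=
  Submodule.eq_of_le_of_finrank_eq (sup_le hpq ((Submodule.span_singleton_le_iff_mem v q).mpr hvq))
    (by rw [finrank_sup_span_singleton hvp, hq])

theorem Module.finrank_add_one_of_ker_eq_range_algebraMap {K Q L : Type*} [Field K] [Ring Q]
    [Nontrivial Q] [Algebra K Q] [Module.Finite K Q] [AddCommGroup L] [Module K L]
    {π : Q →ₗ[K] L} (hπ : Function.Surjective π)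
    (hker : LinearMap.ker π = LinearMap.range (Algebra.linearMap K Q)) :
    Module.finrank K L + 1 = Module.finrank K Q := by
  rw [← π.finrank_range_add_finrank_ker, LinearMap.range_eq_top.mpr hπ, finrank_top, hker,
    LinearMap.finrank_range_of_inj (algebraMap K Q).injective, Module.finrank_self]

section VeryDegenerate

variable {K Q : Type*} [Field K] [CommRing Q] [Algebra K Q] {Q₃ Q₄ : Submodule K Q}

theorem one_notMem_of_mul_eq_zero (h3 : Q₃ ≠ ⊥) (hzero : ∀ x ∈ Q₄, ∀ y ∈ Q₃, x * y = 0) :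
    (1 : Q) ∉ Q₄ := fun h1 =>
  h3 <| (Submodule.eq_bot_iff _).mpr fun y hy => by simpa using hzero 1 h1 y hy

theorem exists_sub_smul_one_sub_smul_mem (hdim : Module.finrank K Q = 5) (hle : Q₃ ≤ Q₄)
    (h3 : Module.finrank K Q₃ = 3) (h4 : Module.finrank K Q₄ = 4)
    (hzero : ∀ x ∈ Q₄, ∀ y ∈ Q₃, x * y = 0) :
    ∃ v ∈ Q₄, ∀ x : Q, ∃ k ξ : K, x - k • 1 - ξ • v ∈ Q₃ := by
  have : Module.Finite K Q := Module.finite_of_finrank_eq_succ hdim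
  obtain ⟨v, hv4, hv3⟩ := SetLike.exists_of_lt (lt_of_le_of_ne hle fun h => by rw [h] at h3; omega)
  have hQ₄ : Q₃ ⊔ Submodule.span K {v} = Q₄ :=
    Submodule.sup_span_singleton_eq_of_finrank_eq_succ hle (by rw [h3, h4]) hv4 hv3
  have hQ : Q₄ ⊔ Submodule.span K {1} = ⊤ :=
    Submodule.sup_span_singleton_eq_of_finrank_eq_succ le_top (by rw [finrank_top, hdim, h4])
      trivial (one_notMem_of_mul_eq_zero (by rintro rfl; simp at h3) hzero)
  refine ⟨v, hv4, fun x => ?_⟩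
  obtain ⟨y, hy, _, hk, rfl⟩ := Submodule.mem_sup.mp (hQ ▸ Submodule.mem_top (x := x))
  obtain ⟨k, rfl⟩ := Submodule.mem_span_singleton.mp hk
  obtain ⟨u, hu, _, hξ, rfl⟩ := Submodule.mem_sup.mp (hQ₄ ▸ hy)
  obtain ⟨ξ, rfl⟩ := Submodule.mem_span_singleton.mp hξ
  exact ⟨k, ξ, by simpa using hu⟩

theorem mul_eq_of_sub_smul_one_sub_smul_mem (hle : Q₃ ≤ Q₄)
    (hzero : ∀ x ∈ Q₄, ∀ y ∈ Q₃, x * y = 0) {v : Q} (hv : v ∈ Q₄) {x y : Q} {kx ky ξx ξy : K}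
    (hx : x - kx • 1 - ξx • v ∈ Q₃) (hy : y - ky • 1 - ξy • v ∈ Q₃) :
    x * y = kx • y + ky • x - (kx * ky) • 1 + (ξx * ξy) • (v * v) := by
  obtain ⟨x₃, hx₃, rfl⟩ : ∃ x₃ ∈ Q₃, x = kx • 1 + x₃ + ξx • v := ⟨_, hx, by abel⟩
  obtain ⟨y₃, hy₃, rfl⟩ : ∃ y₃ ∈ Q₃, y = ky • 1 + y₃ + ξy • v := ⟨_, hy, by abel⟩
  have h33 : x₃ * y₃ = 0 := hzero _ (hle hx₃) _ hy₃
  have hv3 : v * y₃ = 0 := hzero _ hv _ hy₃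
  have h3v : x₃ * v = 0 := mul_comm v x₃ ▸ hzero _ hv _ hx₃
  simp only [mul_add, add_mul, smul_mul_assoc, mul_smul_comm, one_mul, mul_one, h33, hv3, h3v,
    smul_zero, add_zero]
  module

end VeryDegenerate

/-- Let `Q` be a quintic algebra over a field `K`, `L = Q/K`, and let
`F(a,b,c,d,e) = (a∧b∧c∧bc)(a∧d∧e∧de) + (a∧b∧d∧bd)(a∧e∧c∧ec) + (a∧b∧e∧be)(a∧c∧d∧cd)`
be the pentaquadratic form valued in `(Λ⁴L)^⊗2` (products of elements of `Λ⁴L`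
being formed in `Λ⁴L ⊗ Λ⁴L`), where products like `bc` are computed in `Q` and
projected to `L`. If `Q` is very degenerate — i.e., there are subspaces
`Q₃ ⊆ Q₄ ⊆ Q` with `dim Q₃ = 3`, `dim Q₄ = 4` and `Q₄·Q₃ = 0` — then `F` is
identically zero. -/
theorem stmt_10 (K : Type*) [Field K] (Q : Type*) [CommRing Q] [Algebra K Q]
    (hdim : Module.finrank K Q = 5)
    (L : Type*) [AddCommGroup L] [Module K L]
    (π : Q →ₗ[K] L) (hπ : Function.Surjective π)
    (hker : LinearMap.ker π = LinearMap.range (Algebra.linearMap K Q))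
    (Q₃ Q₄ : Submodule K Q) (hle : Q₃ ≤ Q₄)
    (h3 : Module.finrank K Q₃ = 3) (h4 : Module.finrank K Q₄ = 4)
    (hzero : ∀ x ∈ Q₄, ∀ y ∈ Q₃, x * y = 0)
    (a b c d e : Q) :
    (ι K (π a) * ι K (π b) * ι K (π c) * ι K (π (b * c)))
        ⊗ₜ[K] (ι K (π a) * ι K (π d) * ι K (π e) * ι K (π (d * e)))
      + (ι K (π a) * ι K (π b) * ι K (π d) * ι K (π (b * d)))
        ⊗ₜ[K] (ι K (π a) * ι K (π e) * ι K (π c) * ι K (π (e * c)))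
      + (ι K (π a) * ι K (π b) * ι K (π e) * ι K (π (b * e)))
        ⊗ₜ[K] (ι K (π a) * ι K (π c) * ι K (π d) * ι K (π (c * d)))
      = (0 : ExteriorAlgebra K L ⊗[K] ExteriorAlgebra K L) := by
  have : Module.Finite K Q := Module.finite_of_finrank_eq_succ hdim
  have : Nontrivial Q := Module.nontrivial_of_finrank_eq_succ hdim
  have hL : Module.finrank K L = 4 := by
    have := Module.finrank_add_one_of_ker_eq_range_algebraMap hπ hker
    omega
  have : Module.Finite K L := Module.Finite.of_surjective π hπ
  have hπ1 : π 1 = 0 := LinearMap.mem_ker.mp (hker ▸ ⟨1, by simp⟩)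
  obtain ⟨v, hv, hdec⟩ := exists_sub_smul_one_sub_smul_mem hdim hle h3 h4 hzero
  choose k ξ hkξ using hdec
  have hmul (x y : Q) : π (x * y) = k x • π y + k y • π x + (ξ x * ξ y) • π (v * v) := by
    rw [mul_eq_of_sub_smul_one_sub_smul_mem hle hzero hv (hkξ x) (hkξ y)]
    simp only [map_add, map_sub, map_smul, hπ1, smul_zero, sub_zero]
  -- keeps `simp only [hmul]` from rewriting `π (v * v)` forever
  set w := π (v * v)
  have hpl := (ιMulti K 4).plucker_fin_four (Module.finBasisOfFinrankEq K L hL) (π a) w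
    (π b) (π c) (π d) (π e)
  simp only [ιMulti_fin_four] at hpl
  simp only [hmul, ι_mul_ι_mul_ι_mul_ι_add_smul, smul_tmul_smul]
  linear_combination (norm := module) (ξ b * ξ c * ξ d * ξ e) • hpl
end

section
/- Let Q be a very degenerate quintic algebra over a field K, i.e., there are subspaces Q₃ ⊆ Q₄ ⊆ Q with dim Q₃ = 3, dim Q₄ = 4, and Q₄Q₃ = 0. Then Q admits a basis (1, α, β, γ, δ) over K such that all pairwise products among {α, β, γ, δ} vanish except possibly α², i.e., αβ = αγ = αδ = β² = βγ = βδ = γ² = γδ = δ² = 0. -/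
/-!
Take a basis `β, γ, δ` of `Q₃` and `α ∈ Q₄ \ Q₃`. Every product the theorem asks to vanish
has one factor in `Q₄` and the other in `Q₃`. Since `1 · Q₃ = Q₃ ≠ 0`, the unit is not in `Q₄`,
so the flag `Q₃ ⊂ Q₄ ⊂ Q` makes `1, α, β, γ, δ` linearly independent, hence a basis of the
five-dimensional `Q`.
-/

open Submodule

theorem Submodule.one_notMem_of_forall_mul_eq_zero {K A : Type*} [CommSemiring K] [Semiring A]
    [Algebra K A] {M N : Submodule K A} (hN : N ≠ ⊥)
    (hMN : ∀ x ∈ M, ∀ y ∈ N, x * y = 0) : (1 : A) ∉ M := by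
  intro h1
  obtain ⟨y, hy, hy0⟩ := N.exists_mem_ne_zero_of_ne_bot hN
  exact hy0 (by simpa using hMN 1 h1 y hy)

theorem linearIndependent_finCons_finCons_of_flag {K V : Type*} [DivisionRing K]
    [AddCommGroup V] [Module K V] {N M : Submodule K V} (hNM : N ≤ M) {n : ℕ} {v : Fin n → V}
    (hv : LinearIndependent K v) (hvN : ∀ i, v i ∈ N) {a w : V} (haM : a ∈ M) (haN : a ∉ N)
    (hwM : w ∉ M) : LinearIndependent K (Fin.cons w (Fin.cons a v : Fin (n + 1) → V)) := by
  have hspan_v : span K (Set.range v) ≤ N := span_le.mpr (Set.range_subset_iff.mpr hvN)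
  have hspan_av : span K (Set.range (Fin.cons a v : Fin (n + 1) → V)) ≤ M :=
    span_le.mpr <| Set.range_subset_iff.mpr <| Fin.cases haM fun i => hNM (hvN i)
  exact (hv.finCons fun h => haN (hspan_v h)).finCons fun h => hwM (hspan_av h)

theorem Matrix.range_vecCons_five {α : Type*} (a b c d e : α) :
    Set.range ![a, b, c, d, e] = {a, b, c, d, e} := by
  simp only [Matrix.range_cons, Matrix.range_empty, Set.union_empty, Set.singleton_union]

/-- A very degenerate quintic algebra `Q` over a field `K` (there are
subspaces `Q₃ ⊆ Q₄ ⊆ Q` with `dim Q₃ = 3`, `dim Q₄ = 4`, `Q₄Q₃ = 0`) admits a basis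
`(1, α, β, γ, δ)` over `K` in which all pairwise products among `{α, β, γ, δ}`
vanish except possibly `α²`. -/
theorem stmt_11 (K : Type*) [Field K] (Q : Type*) [CommRing Q] [Algebra K Q]
    (hdim : Module.finrank K Q = 5)
    (Q₃ Q₄ : Submodule K Q) (hle : Q₃ ≤ Q₄)
    (h3 : Module.finrank K Q₃ = 3) (h4 : Module.finrank K Q₄ = 4)
    (hzero : ∀ x ∈ Q₄, ∀ y ∈ Q₃, x * y = 0) :
    ∃ α β γ δ : Q,
      (LinearIndependent K ![(1 : Q), α, β, γ, δ] ∧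
        Submodule.span K {(1 : Q), α, β, γ, δ} = ⊤) ∧
      α * β = 0 ∧ α * γ = 0 ∧ α * δ = 0 ∧
      β * β = 0 ∧ β * γ = 0 ∧ β * δ = 0 ∧
      γ * γ = 0 ∧ γ * δ = 0 ∧ δ * δ = 0 := by
  have : FiniteDimensional K Q := .of_finrank_pos (by omega)
  obtain ⟨α, hα4, hα3⟩ :=
    SetLike.exists_of_lt (lt_of_le_of_finrank_lt_finrank hle (by omega))
  obtain ⟨v, hv_li, hvQ₃⟩ : ∃ v : Fin 3 → Q, LinearIndependent K v ∧ ∀ i, v i ∈ Q₃ :=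
    let b := Module.finBasisOfFinrankEq K Q₃ h3
    ⟨_, b.linearIndependent.map' Q₃.subtype (ker_subtype Q₃), fun i => (b i).2⟩
  have hv_eq : v = ![v 0, v 1, v 2] := by
    ext i; fin_cases i <;> rfl
  have hQ₃ : Q₃ ≠ ⊥ := by rintro rfl; simp at h3
  have hli : LinearIndependent K ![1, α, v 0, v 1, v 2] :=
    linearIndependent_finCons_finCons_of_flag hle (hv_eq ▸ hv_li) (hv_eq ▸ hvQ₃) hα4 hα3
      (one_notMem_of_forall_mul_eq_zero hQ₃ hzero)
  have hspan : span K {1, α, v 0, v 1, v 2} = ⊤ := by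
    rw [← Matrix.range_vecCons_five]
    exact hli.span_eq_top_of_card_eq_finrank (by simp [hdim])
  have hmul : ∀ x ∈ Q₄, ∀ i, x * v i = 0 := fun x hx i => hzero x hx _ (hvQ₃ i)
  have hv4 : ∀ i, v i ∈ Q₄ := fun i => hle (hvQ₃ i)
  exact ⟨α, v 0, v 1, v 2, ⟨hli, hspan⟩, hmul α hα4 0, hmul α hα4 1, hmul α hα4 2,
    hmul _ (hv4 0) 0, hmul _ (hv4 0) 1, hmul _ (hv4 0) 2, hmul _ (hv4 1) 1, hmul _ (hv4 1) 2,
    hmul _ (hv4 2) 2⟩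
end

section
/- Let R be a DVR with maximal ideal 𝔭 = (π), and let Q be a quintic R-algebra possessing an R-basis (1, x, ε₁, ε₂, ε₃) with the property that all products of elements of (x, ε₁, ε₂, ε₃) with elements of (ε₁, ε₂, ε₃) lie in πQ. Set M = ⟨π, x, ε₁, ε₂, ε₃⟩ and N = ⟨π, πx, ε₁, ε₂, ε₃⟩ (R-submodules of Q). Then N² ⊆ πM. -/
/-!
Modulo `π`, each `εⱼ` annihilates every basis vector except `1`, so `q εⱼ ≡ c(q) εⱼ`, where
`c(q)` is the coefficient of `1` in `q`; and `πM` consists of the `π q` with `π ∣ c(q)`.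
All products of generators of `N` other than `εᵢ εⱼ` are visibly in `πM`. For these, write
`εᵢ εⱼ = π qᵢⱼ`. If `i ≠ j`, cancelling `π` in `(εᵢ εⱼ) εⱼ = εᵢ (εⱼ εⱼ)` gives
`qᵢⱼ εⱼ = qⱼⱼ εᵢ`, hence `c(qᵢⱼ) εⱼ ≡ c(qⱼⱼ) εᵢ (mod π)`, and comparing coefficients shows
`π ∣ c(qᵢⱼ)` and `π ∣ c(qⱼⱼ)`. The squares are covered because there are at least two `ε`'s.
-/

open Pointwise Submodule

namespace Module.Basis

variable {ι R Q : Type*} [CommRing R] [CommRing Q] [Algebra R Q]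
  (b : Basis ι R Q) {i₀ : ι} (π : R)

theorem dvd_repr_of_mem_smul_top {x : Q} (hx : x ∈ π • (⊤ : Submodule R Q)) (k : ι) :
    π ∣ b.repr x k := by
  obtain ⟨y, -, rfl⟩ := (mem_smul_pointwise_iff_exists x π ⊤).1 hx
  exact ⟨b.repr y k, by simp⟩

theorem comap_coord_le {M : Submodule R Q} (h₀ : π • b i₀ ∈ M) (hk : ∀ k ≠ i₀, b k ∈ M) :
    comap (b.coord i₀) (Ideal.span {π}) ≤ M := by
  intro q hq
  obtain ⟨d, hd⟩ := Ideal.mem_span_singleton'.1 (mem_comap.1 hq)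
  rw [← b.linearCombination_repr q, Finsupp.linearCombination_apply, Finsupp.sum]
  refine sum_mem fun k _ => ?_
  by_cases hk₀ : k = i₀
  · subst hk₀
    rw [← coord_apply, ← hd, mul_smul]
    exact M.smul_mem d h₀
  · exact M.smul_mem _ (hk k hk₀)

theorem smul_top_le_comap_coord :
    π • (⊤ : Submodule R Q) ≤ comap (b.coord i₀) (Ideal.span {π}) := fun _ hx =>
  Ideal.mem_span_singleton.2 (b.dvd_repr_of_mem_smul_top π hx i₀)

variable {b}

theorem mul_sub_coord_smul_mem (hb₀ : b i₀ = 1) {I : Submodule R Q} {e : Q}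
    (he : ∀ k ≠ i₀, b k * e ∈ I) (q : Q) : q * e - b.coord i₀ q • e ∈ I := by
  let f : Q →ₗ[R] Q := LinearMap.mulRight R e - (b.coord i₀).smulRight e
  suffices (⊤ : Submodule R Q) ≤ I.comap f from this trivial
  rw [← b.span_eq, span_le, Set.range_subset_iff]
  intro k
  simp only [SetLike.mem_coe, mem_comap, f, LinearMap.sub_apply, LinearMap.mulRight_apply,
    LinearMap.smulRight_apply, coord_apply, repr_self]
  by_cases hk : k = i₀
  · simp [hk, hb₀]
  · simpa [Ne.symm hk] using he k hk

theorem dvd_coord_of_mul_eq_smul [IsDomain R] (hb₀ : b i₀ = 1) {π : R} (hπ : π ≠ 0)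
    {i j : ι} (hij : i ≠ j) (hi : ∀ k ≠ i₀, b k * b i ∈ π • (⊤ : Submodule R Q))
    (hj : ∀ k ≠ i₀, b k * b j ∈ π • (⊤ : Submodule R Q)) {q q' : Q}
    (hq : b i * b j = π • q) (hq' : b j * b j = π • q') :
    π ∣ b.coord i₀ q ∧ π ∣ b.coord i₀ q' := by
  have := b.isTorsionFree
  have hassoc : q * b j = q' * b i := smul_right_injective Q hπ <| by
    simp only [← smul_mul_assoc, ← hq, ← hq', mul_comm (b j * b j), mul_assoc]
  have hdiff : b.coord i₀ q' • b i - b.coord i₀ q • b j ∈ π • (⊤ : Submodule R Q) := by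
    have := sub_mem (mul_sub_coord_smul_mem hb₀ hj q) (mul_sub_coord_smul_mem hb₀ hi q')
    rwa [hassoc, sub_sub_sub_cancel_left] at this
  constructor
  · simpa [repr_self, Finsupp.single_apply, hij, hij.symm] using
      b.dvd_repr_of_mem_smul_top π hdiff j
  · simpa [repr_self, Finsupp.single_apply, hij, hij.symm] using
      b.dvd_repr_of_mem_smul_top π hdiff i

theorem mul_mem_smul_comap_coord [IsDomain R] (hb₀ : b i₀ = 1) {π : R} (hπ : π ≠ 0)
    {E : Set ι} (hE : E.Nontrivial) (hi₀ : i₀ ∉ E)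
    (hεE : ∀ e ∈ E, ∀ k ≠ i₀, b k * b e ∈ π • (⊤ : Submodule R Q)) {i j : ι}
    (hi : i ∈ E) (hj : j ∈ E) :
    b i * b j ∈ π • comap (b.coord i₀) (Ideal.span {π}) := by
  have hne {e} (he : e ∈ E) : e ≠ i₀ := fun h => hi₀ (h ▸ he)
  have hdiv {k l} (hk : k ∈ E) (hl : l ∈ E) : ∃ q, b k * b l = π • q := by
    obtain ⟨q, -, hq⟩ := (mem_smul_pointwise_iff_exists _ _ _).1 (hεE l hl k (hne hk))
    exact ⟨q, hq.symm⟩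
  obtain ⟨q, hq⟩ := hdiv hi hj
  rw [hq]
  refine smul_mem_pointwise_smul _ _ _ (Ideal.mem_span_singleton.2 ?_)
  by_cases hij : i = j
  · subst hij
    obtain ⟨k, hk, hki⟩ := hE.exists_ne i
    obtain ⟨q'', hq''⟩ := hdiv hk hi
    exact (dvd_coord_of_mul_eq_smul hb₀ hπ hki (hεE k hk) (hεE i hi) hq'' hq).2
  · obtain ⟨q', hq'⟩ := hdiv hj hj
    exact (dvd_coord_of_mul_eq_smul hb₀ hπ hij (hεE i hi) (hεE j hj) hq hq').1

theorem mul_mem_smul_comap_coord_of_mem_span [IsDomain R] (hb₀ : b i₀ = 1) {π : R} (hπ : π ≠ 0)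
    {E : Set ι} (hE : E.Nontrivial) (hi₀ : i₀ ∉ E)
    (hεE : ∀ e ∈ E, ∀ k ≠ i₀, b k * b e ∈ π • (⊤ : Submodule R Q)) {x : Q}
    (hx : ∀ e ∈ E, x * b e ∈ π • (⊤ : Submodule R Q)) {u v : Q}
    (hu : u ∈ span R (insert (π • 1) (insert (π • x) (b '' E))))
    (hv : v ∈ span R (insert (π • 1) (insert (π • x) (b '' E)))) :
    u * v ∈ π • comap (b.coord i₀) (Ideal.span {π}) := by
  set S := insert (π • 1) (insert (π • x) (b '' E))
  have hπ_top {y : Q} : π • y ∈ π • (⊤ : Submodule R Q) := smul_mem_pointwise_smul _ _ _ trivial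
  have hS : S ⊆ (comap (b.coord i₀) (Ideal.span {π}) : Set Q) := by
    rintro s (rfl | rfl | ⟨e, he, rfl⟩)
    · exact b.smul_top_le_comap_coord π hπ_top
    · exact b.smul_top_le_comap_coord π hπ_top
    · have he₀ : i₀ ≠ e := fun h => hi₀ (h ▸ he)
      simp [coord_apply, repr_self, he₀]
  have hxS : ∀ t ∈ S, x * t ∈ π • (⊤ : Submodule R Q) := by
    rintro t (rfl | rfl | ⟨e, he, rfl⟩)
    · simpa using hπ_top
    · simpa [mul_smul_comm] using hπ_top
    · exact hx e he
  have hprod : ∀ s ∈ S, ∀ t ∈ S, s * t ∈ π • comap (b.coord i₀) (Ideal.span {π}) := by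
    rintro s (rfl | rfl | ⟨i, hi, rfl⟩) t ht
    · rw [smul_one_mul]
      exact smul_mem_pointwise_smul _ _ _ (hS ht)
    · rw [smul_mul_assoc]
      exact smul_mem_pointwise_smul _ _ _ (b.smul_top_le_comap_coord π (hxS t ht))
    · rcases ht with rfl | rfl | ⟨j, hj, rfl⟩
      · rw [mul_smul_one]
        exact smul_mem_pointwise_smul _ _ _ (hS (Or.inr (Or.inr ⟨i, hi, rfl⟩)))
      · rw [mul_comm, smul_mul_assoc]
        exact smul_mem_pointwise_smul _ _ _ (b.smul_top_le_comap_coord π (hx i hi))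
      · exact mul_mem_smul_comap_coord hb₀ hπ hE hi₀ hεE hi hj
  have huv := mul_mem_mul hu hv
  rw [span_mul_span] at huv
  exact span_le.2 (Set.mul_subset_iff.2 hprod) huv

end Module.Basis

theorem stmt_15_general (R : Type*) [CommRing R] [IsDomain R]
    (π : R) (hπ : Irreducible π)
    (Q : Type*) [CommRing Q] [Algebra R Q]
    (b : Module.Basis (Fin 5) R Q) (hb0 : b 0 = 1)
    (hdeg : ∀ i ∈ ({1, 2, 3, 4} : Finset (Fin 5)), ∀ j ∈ ({2, 3, 4} : Finset (Fin 5)),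
      b i * b j ∈ Ideal.span {π} • (⊤ : Submodule R Q))
    (M N : Submodule R Q)
    (hM : M = Submodule.span R {algebraMap R Q π, b 1, b 2, b 3, b 4})
    (hN : N = Submodule.span R {algebraMap R Q π, (algebraMap R Q π) * b 1, b 2, b 3, b 4}) :
    ∀ u ∈ N, ∀ v ∈ N, u * v ∈ Ideal.span {π} • M := by
  intro u hu v hv
  simp only [ideal_span_singleton_smul] at hdeg ⊢
  let E : Set (Fin 5) := {2, 3, 4}
  have hεE : ∀ e ∈ E, ∀ k ≠ 0, b k * b e ∈ π • (⊤ : Submodule R Q) := fun e he k hk =>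
    hdeg k (by fin_cases k <;> simp_all) e (by simpa [E] using he)
  have hPM : comap (b.coord 0) (Ideal.span {π}) ≤ M := by
    refine hM ▸ b.comap_coord_le π ?_ fun k hk => subset_span ?_
    · rw [hb0, ← Algebra.algebraMap_eq_smul_one]
      exact subset_span (Set.mem_insert _ _)
    · fin_cases k <;> simp_all
  have hN' : N = span R (insert (π • 1) (insert (π • b 1) (b '' E))) := by
    simp [hN, E, Set.image_insert_eq, Algebra.algebraMap_eq_smul_one]
  exact smul_le_smul_left π hPM <| Module.Basis.mul_mem_smul_comap_coord_of_mem_span hb0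
    hπ.ne_zero ⟨2, by simp [E], 3, by simp [E], by decide⟩ (by simp [E]) hεE
    (fun e he => hεE e he 1 (by decide)) (hN' ▸ hu) (hN' ▸ hv)

/-- Let `R` be a DVR with uniformizer `π`, and `Q` a quintic
`R`-algebra with basis `(1, x, ε₁, ε₂, ε₃)` such that all products of elements of
`(x, ε₁, ε₂, ε₃)` with elements of `(ε₁, ε₂, ε₃)` lie in `πQ`. With
`M = ⟨π, x, ε₁, ε₂, ε₃⟩` and `N = ⟨π, πx, ε₁, ε₂, ε₃⟩`, one has `N² ⊆ πM`. -/
theorem stmt_15 (R : Type*) [CommRing R] [IsDomain R] [IsDiscreteValuationRing R]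
    (π : R) (hπ : Irreducible π)
    (Q : Type*) [CommRing Q] [Algebra R Q]
    (b : Module.Basis (Fin 5) R Q) (hb0 : b 0 = 1)
    (hdeg : ∀ i ∈ ({1, 2, 3, 4} : Finset (Fin 5)), ∀ j ∈ ({2, 3, 4} : Finset (Fin 5)),
      b i * b j ∈ Ideal.span {π} • (⊤ : Submodule R Q))
    (M N : Submodule R Q)
    (hM : M = Submodule.span R {algebraMap R Q π, b 1, b 2, b 3, b 4})
    (hN : N = Submodule.span R {algebraMap R Q π, (algebraMap R Q π) * b 1, b 2, b 3, b 4}) :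
    ∀ u ∈ N, ∀ v ∈ N, u * v ∈ Ideal.span {π} • M :=
  stmt_15_general R π hπ Q b hb0 hdeg M N hM hN
end

section
/- Let R be a DVR with uniformizer π, and Q a quintic R-algebra with R-basis (1, x, ε₁, ε₂, ε₃) such that (x,ε₁,ε₂,ε₃)·(ε₁,ε₂,ε₃) ⊆ πQ. With N = ⟨π, πx, ε₁, ε₂, ε₃⟩ and M = ⟨π, x, ε₁, ε₂, ε₃⟩, if additionally N² ⊆ πN, then π⁻¹N (inside Q ⊗ Frac(R)) is a ring, i.e., a quintic R-algebra strictly containing Q; hence Q is not maximal. -/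
/-!
Put `c = π ∈ Frac(R) ⊗ Q`, a unit. The set `π⁻¹N = {y | c y ∈ N}` contains `1` because `π ∈ N`,
and it is closed under multiplication because `c² y z = (c y)(c z) ∈ N² ⊆ c N` gives `c y z ∈ N`
after cancelling `c`. Multiplication by `c` identifies it with `N`, which is free on
`(π, π x, ε₁, ε₂, ε₃)`. It contains `Q` since `π Q ⊆ N`, and strictly so since `ε₁ ∉ π Q`.
-/

open TensorProduct

theorem LinearIndependent.smul_of_ne_zero {ι R M : Type*} [Ring R] [NoZeroDivisors R]
    [AddCommGroup M] [Module R M] {v : ι → M} (hv : LinearIndependent R v) {c : ι → R}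
    (hc : ∀ i, c i ≠ 0) : LinearIndependent R fun i ↦ c i • v i := by
  refine linearIndependent_iff'.mpr fun s g hg i hi ↦ ?_
  have hgc : g i * c i = 0 :=
    linearIndependent_iff'.mp hv s (fun j ↦ g j * c j) (by simpa only [mul_smul] using hg) i hi
  exact (mul_eq_zero.mp hgc).resolve_right (hc i)

theorem Module.Basis.smul_ne_apply {ι R M : Type*} [CommRing R] [AddCommGroup M] [Module R M]
    (b : Module.Basis ι R M) {r : R} (hr : ¬IsUnit r) (q : M) (i : ι) : r • q ≠ b i := by
  intro h
  have h_coeff : r * b.repr q i = 1 := by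
    simpa using congrArg (fun m ↦ b.repr m i) h
  exact hr (.of_mul_eq_one _ h_coeff)

theorem isUnit_algebraMap_of_isFractionRing {R : Type*} (K : Type*) {A : Type*} [CommRing R]
    [IsDomain R] [Field K] [Algebra R K] [IsFractionRing R K] [Semiring A] [Algebra K A]
    [Algebra R A] [IsScalarTower R K A] {r : R} (hr : r ≠ 0) : IsUnit (algebraMap R A r) := by
  rw [IsScalarTower.algebraMap_apply R K]
  exact (IsLocalization.map_units K ⟨r, mem_nonZeroDivisors_of_ne_zero hr⟩).map _

namespace Submodule

variable {R A : Type*} [CommRing R] [CommRing A] [Algebra R A] {r : R} (N : Submodule R A)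

/-- The paper's `r⁻¹N`, as `{y | r y ∈ N}` so that `r` need not be invertible in `A`. -/
def invSMulSubalgebra (hr : IsSMulRegular A r) (h_one : algebraMap R A r ∈ N)
    (h_sq : N * N ≤ Ideal.span {r} • N) : Subalgebra R A :=
  (N.comap (LinearMap.mulLeft R (algebraMap R A r))).toSubalgebra
    (by simpa only [mem_comap, LinearMap.mulLeft_apply, mul_one] using h_one) fun y z hy hz ↦ by
      have hyz := h_sq (mul_mem_mul hy hz)
      rw [ideal_span_singleton_smul, mem_smul_pointwise_iff_exists] at hyz
      obtain ⟨w, hw, hw_eq⟩ := hyz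
      have : w = algebraMap R A r * (y * z) := hr <| by
        change r • w = r • _
        simp only [LinearMap.mulLeft_apply] at hw_eq
        rw [hw_eq, Algebra.smul_def]
        ring
      rwa [mem_comap, LinearMap.mulLeft_apply, ← this]

noncomputable def invSMulSubalgebraEquiv (hr : IsSMulRegular A r) (h_one : algebraMap R A r ∈ N)
    (h_sq : N * N ≤ Ideal.span {r} • N) (hu : IsUnit (algebraMap R A r)) :
    N.invSMulSubalgebra hr h_one h_sq ≃ₗ[R] N :=
  let e :=
    LinearEquiv.ofBijective (LinearMap.mulLeft R (algebraMap R A r)) hu.unit.mulLeft_bijective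
  (Subalgebra.toSubmoduleEquiv _).symm.trans <| e.ofSubmodules _ N <| by
    rw [invSMulSubalgebra, toSubalgebra_toSubmodule]
    exact map_comap_eq_of_surjective e.surjective N

theorem map_mul_le_ideal_span_smul {B : Type*} [CommRing B] [Algebra R B] (f : A →ₐ[R] B)
    (h_sq : N * N ≤ Ideal.span {r} • N) :
    N.map f.toLinearMap * N.map f.toLinearMap ≤ Ideal.span {r} • N.map f.toLinearMap := by
  rw [← Submodule.map_mul, ← map_smul'']
  exact map_mono h_sq

theorem range_ssubset_invSMulSubalgebra_map {Q : Type*} [CommRing Q] [Algebra R Q]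
    {N : Submodule R Q} (f : Q →ₐ[R] A) (hf : Function.Injective f) (hr : IsSMulRegular A r)
    (h_one : algebraMap R A r ∈ N.map f.toLinearMap)
    (h_sq : N.map f.toLinearMap * N.map f.toLinearMap ≤ Ideal.span {r} • N.map f.toLinearMap)
    (hu : IsUnit (algebraMap R A r)) (hrN : ∀ q, r • q ∈ N) {n : Q} (hn : n ∈ N)
    (hn_not : ∀ q, r • q ≠ n) :
    Set.range f ⊂ (N.map f.toLinearMap).invSMulSubalgebra hr h_one h_sq := by
  have hf_smul (q : Q) : algebraMap R A r * f q = f (r • q) := by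
    rw [Algebra.smul_def, map_mul, f.commutes]
  refine (Set.ssubset_iff_of_subset ?_).mpr ⟨↑hu.unit⁻¹ * f n, ⟨n, hn, ?_⟩, ?_⟩
  · rintro _ ⟨q, rfl⟩
    exact ⟨r • q, hrN q, (hf_smul q).symm⟩
  · rw [AlgHom.toLinearMap_apply, LinearMap.mulLeft_apply, ← mul_assoc, hu.mul_val_inv, one_mul]
  · rintro ⟨q, hq⟩
    refine hn_not q (hf ?_)
    rw [← hf_smul, hq, ← mul_assoc, hu.mul_val_inv, one_mul]

end Submodule

section QuinticLattice

variable {R Q : Type*} [CommRing R] [CommRing Q] [Algebra R Q]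
  (b : Module.Basis (Fin 5) R Q) (hb0 : b 0 = 1) (π : R)

def quinticLattice : Submodule R Q :=
  Submodule.span R {algebraMap R Q π, algebraMap R Q π * b 1, b 2, b 3, b 4}

include hb0 in
theorem quinticLattice_eq_span_range_smul :
    quinticLattice b π = Submodule.span R (Set.range fun i ↦ ![π, π, 1, 1, 1] i • b i) := by
  unfold quinticLattice
  congr 1
  have : (fun i ↦ ![π, π, 1, 1, 1] i • b i) =
      ![algebraMap R Q π, algebraMap R Q π * b 1, b 2, b 3, b 4] := by
    funext i
    fin_cases i <;> simp [hb0, Algebra.smul_def]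
  simp only [this, Matrix.range_cons, Matrix.range_empty, Set.union_empty, Set.singleton_union]

include hb0 in
theorem smul_mem_quinticLattice (q : Q) : π • q ∈ quinticLattice b π := by
  rw [quinticLattice_eq_span_range_smul b hb0, ← b.sum_repr q, Finset.smul_sum]
  refine Submodule.sum_mem _ fun i _ ↦ ?_
  have : π • b i = ![1, 1, π, π, π] i • ![π, π, 1, 1, 1] i • b i := by
    fin_cases i <;> simp
  rw [smul_comm, this]
  exact Submodule.smul_mem _ _ (Submodule.smul_mem _ _ (Submodule.subset_span ⟨i, rfl⟩))

noncomputable def quinticLatticeBasis [IsDomain R] (hπ : π ≠ 0) :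
    Module.Basis (Fin 5) R (quinticLattice b π) :=
  have hc : ∀ i, ![π, π, 1, 1, 1] i ≠ 0 := by
    intro i
    fin_cases i <;> simp [hπ]
  (Module.Basis.span (b.linearIndependent.smul_of_ne_zero hc)).map
    (LinearEquiv.ofEq _ _ (quinticLattice_eq_span_range_smul b hb0 π).symm)

end QuinticLattice

theorem stmt_16_general (R : Type*) [CommRing R] [IsDomain R]
    (π : R) (hπ : Irreducible π)
    (Q : Type*) [CommRing Q] [Algebra R Q]
    (b : Module.Basis (Fin 5) R Q) (hb0 : b 0 = 1)
    (N : Submodule R Q)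
    (hN : N = Submodule.span R {algebraMap R Q π, (algebraMap R Q π) * b 1, b 2, b 3, b 4})
    (hN2 : ∀ u ∈ N, ∀ v ∈ N, u * v ∈ Ideal.span {π} • N) :
    ∃ T : Subalgebra R (FractionRing R ⊗[R] Q),
      (T : Set (FractionRing R ⊗[R] Q)) =
        {y : FractionRing R ⊗[R] Q |
          algebraMap R (FractionRing R ⊗[R] Q) π * y ∈
            N.map (Algebra.TensorProduct.includeRight :
              Q →ₐ[R] FractionRing R ⊗[R] Q).toLinearMap} ∧
      Set.range (Algebra.TensorProduct.includeRight :
          Q →ₐ[R] FractionRing R ⊗[R] Q) ⊂ (T : Set (FractionRing R ⊗[R] Q)) ∧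
      Module.Finite R T ∧ Module.Free R T ∧ Module.finrank R T = 5 := by
  let ι : Q →ₐ[R] FractionRing R ⊗[R] Q := Algebra.TensorProduct.includeRight
  have : Module.Free R Q := .of_basis b
  have hι : Function.Injective ι :=
    Algebra.TensorProduct.includeRight_injective (IsFractionRing.injective R _)
  have hu : IsUnit (algebraMap R (FractionRing R ⊗[R] Q) π) :=
    isUnit_algebraMap_of_isFractionRing (FractionRing R) hπ.ne_zero
  have hr := (isSMulRegular_algebraMap_iff _).mp (hu.isSMulRegular (FractionRing R ⊗[R] Q))
  replace hN : N = quinticLattice b π := hN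
  have h_one : algebraMap R _ π ∈ N.map ι.toLinearMap :=
    ⟨_, hN ▸ Submodule.subset_span (by simp), ι.commutes π⟩
  have h_sq := Submodule.map_mul_le_ideal_span_smul _ ι (Submodule.mul_le.mpr hN2)
  have h_ssubset := Submodule.range_ssubset_invSMulSubalgebra_map ι hι hr h_one h_sq hu
    (hN ▸ smul_mem_quinticLattice b hb0 π) (hN ▸ Submodule.subset_span (by simp))
    (b.smul_ne_apply hπ.not_isUnit · 2)
  let e : N ≃ₗ[R] _ := (Submodule.equivMapOfInjective _ hι N).trans
    (Submodule.invSMulSubalgebraEquiv _ hr h_one h_sq hu).symm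
  let bT := (quinticLatticeBasis b hb0 π hπ.ne_zero).map ((LinearEquiv.ofEq _ _ hN.symm).trans e)
  exact ⟨_, rfl, h_ssubset, .of_basis bT, .of_basis bT, Module.finrank_eq_card_basis bT⟩

/-- Let `R` be a DVR with uniformizer `π` and `Q` a quintic
`R`-algebra with basis `(1, x, ε₁, ε₂, ε₃)` such that `(x,ε₁,ε₂,ε₃)·(ε₁,ε₂,ε₃) ⊆ πQ`.
With `N = ⟨π, πx, ε₁, ε₂, ε₃⟩`, if moreover `N² ⊆ πN`, then `π⁻¹N` (inside
`Q ⊗ Frac(R)`) is a ring: it is (the underlying set of) an `R`-subalgebra of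
`Frac(R) ⊗ Q`, free of rank 5 as an `R`-module, strictly containing the image of
`Q`; hence `Q` is not maximal. -/
theorem stmt_16 (R : Type*) [CommRing R] [IsDomain R] [IsDiscreteValuationRing R]
    (π : R) (hπ : Irreducible π)
    (Q : Type*) [CommRing Q] [Algebra R Q]
    (b : Module.Basis (Fin 5) R Q) (hb0 : b 0 = 1)
    (hdeg : ∀ i ∈ ({1, 2, 3, 4} : Finset (Fin 5)), ∀ j ∈ ({2, 3, 4} : Finset (Fin 5)),
      b i * b j ∈ Ideal.span {π} • (⊤ : Submodule R Q))
    (N : Submodule R Q)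
    (hN : N = Submodule.span R {algebraMap R Q π, (algebraMap R Q π) * b 1, b 2, b 3, b 4})
    (hN2 : ∀ u ∈ N, ∀ v ∈ N, u * v ∈ Ideal.span {π} • N) :
    ∃ T : Subalgebra R (FractionRing R ⊗[R] Q),
      (T : Set (FractionRing R ⊗[R] Q)) =
        {y : FractionRing R ⊗[R] Q |
          algebraMap R (FractionRing R ⊗[R] Q) π * y ∈
            N.map (Algebra.TensorProduct.includeRight :
              Q →ₐ[R] FractionRing R ⊗[R] Q).toLinearMap} ∧
      Set.range (Algebra.TensorProduct.includeRight :
          Q →ₐ[R] FractionRing R ⊗[R] Q) ⊂ (T : Set (FractionRing R ⊗[R] Q)) ∧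
      Module.Finite R T ∧ Module.Free R T ∧ Module.finrank R T = 5 :=
  stmt_16_general R π hπ Q b hb0 N hN hN2
end

section
/- Let K be a field of characteristic not 2, and let M be the 5-dimensional K-vector space with basis f₁,…,f₅. The six vectors v_i = f_{i−2} − f_{i−1} + f_i − f_{i+1} + f_{i+2} for 1 ≤ i ≤ 5 (indices mod 5) together with v₆ = f₁ + f₂ + f₃ + f₄ + f₅ satisfy v₁ + v₂ + v₃ + v₄ + v₅ + v₆ = 2(f₁ + ⋯ + f₅), and any five of the six vectors v₁,…,v₆ form a basis of M. -/
/-!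
Writing `s = f₁ + ⋯ + f₅`, each of `v₁, …, v₅` is an alternating sum of the five cyclic
translates of `f`, so `v₁ + ⋯ + v₅ = (1 - 1 + 1 - 1 + 1) s = s` and `∑ vᵢ = 2 s`.
In coordinates all six vectors have entries `±1`, and each of the six `5 × 5` minors of the
resulting integer matrix is `±16 = ±2⁴`; its image in `K` is a unit because `2 ≠ 0` in `K`.
-/

theorem Fintype.sum_alternating_shifts {G M : Type*} [AddGroup G] [Fintype G]
    [AddCommGroup M] (f : G → M) (a b c d : G) :
    ∑ i, (f (i - a) - f (i - b) + f i - f (i + c) + f (i + d)) = ∑ i, f i := by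
  have add_shift (x : G) : ∑ i, f (i + x) = ∑ i, f i := Equiv.sum_comp (Equiv.addRight x) f
  have sub_shift (x : G) : ∑ i, f (i - x) = ∑ i, f i := Equiv.sum_comp (Equiv.subRight x) f
  simp only [Finset.sum_add_distrib, Finset.sum_sub_distrib, add_shift, sub_shift]
  abel

theorem Matrix.span_rows_eq_top_of_det_ne_zero {K n : Type*} [Field K] [Fintype n]
    [DecidableEq n] {A : Matrix n n K} (hA : A.det ≠ 0) :
    Submodule.span K (Set.range fun i ↦ A i) = ⊤ :=
  (linearIndependent_rows_of_det_ne_zero hA).span_eq_top_of_card_eq_finrank' (by simp)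

/-- Row `i` holds the coordinates of `v_{i+1}` in the basis `f₁, …, f₅`. -/
def pentagonRows : Matrix (Fin 6) (Fin 5) ℤ :=
  !![ 1, -1,  1,  1, -1;
     -1,  1, -1,  1,  1;
      1, -1,  1, -1,  1;
      1,  1, -1,  1, -1;
     -1,  1,  1, -1,  1;
      1,  1,  1,  1,  1]

set_option maxRecDepth 10000 in
theorem det_pentagonRows_submatrix_succAbove (j : Fin 6) :
    (pentagonRows.submatrix j.succAbove id).det = 16 ∨
      (pentagonRows.submatrix j.succAbove id).det = -16 := by
  revert j
  decide

theorem eq_pentagonRows {K : Type*} [Field K] {f : Fin 5 → Fin 5 → K}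
    (hf : ∀ i, f i = Pi.single i 1) {v : Fin 6 → Fin 5 → K}
    (hv : ∀ i : Fin 5, v i.castSucc = f (i - 2) - f (i - 1) + f i - f (i + 1) + f (i + 2))
    (hv6 : v (Fin.last 5) = ∑ i, f i) :
    v = fun i k ↦ (pentagonRows i k : K) := by
  funext i k
  induction i using Fin.lastCases with
  | last => rw [hv6]; fin_cases k <;> simp [hf, pentagonRows]
  | cast i =>
    rw [hv i]
    fin_cases i <;> fin_cases k <;> simp +decide [hf, Pi.single_apply, pentagonRows]

theorem det_pentagonRows_submatrix_succAbove_map_ne_zero {K : Type*} [Field K]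
    (h2 : (2 : K) ≠ 0) (j : Fin 6) :
    ((pentagonRows.submatrix j.succAbove id).map (Int.castRingHom K)).det ≠ 0 := by
  have h16 : (16 : K) ≠ 0 := by
    simpa [show (16 : K) = 2 ^ 4 by norm_num] using pow_ne_zero 4 h2
  rw [← RingHom.mapMatrix_apply, ← RingHom.map_det]
  rcases det_pentagonRows_submatrix_succAbove j with h | h <;> simpa [h]

/-- Let `K` be a field of characteristic ≠ 2 and `M = K⁵` with basis
`f₁,…,f₅`. The six vectors `vᵢ = f_{i−2} − f_{i−1} + fᵢ − f_{i+1} + f_{i+2}`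
(`1 ≤ i ≤ 5`, indices mod 5) and `v₆ = f₁ + ⋯ + f₅` satisfy
`v₁ + ⋯ + v₆ = 2(f₁ + ⋯ + f₅)`, and any five of the six form a basis of `M`. -/
theorem stmt_18 (K : Type*) [Field K] (h2 : (2 : K) ≠ 0)
    (f : Fin 5 → (Fin 5 → K)) (hf : ∀ i, f i = Pi.single i 1)
    (v : Fin 6 → (Fin 5 → K))
    (hv : ∀ i : Fin 5, v i.castSucc
      = f (i - 2) - f (i - 1) + f i - f (i + 1) + f (i + 2))
    (hv6 : v (Fin.last 5) = ∑ i, f i) :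
    (∑ i, v i) = (2 : K) • (∑ i, f i) ∧
    ∀ j : Fin 6, LinearIndependent K (v ∘ j.succAbove) ∧
      Submodule.span K (Set.range (v ∘ j.succAbove)) = ⊤ := by
  refine ⟨?_, fun j ↦ ?_⟩
  · rw [Fin.sum_univ_castSucc, hv6]
    simp only [hv, Fintype.sum_alternating_shifts, two_smul]
  · have hdet : (Matrix.of (v ∘ j.succAbove)).det ≠ 0 := by
      rw [eq_pentagonRows hf hv hv6]
      exact det_pentagonRows_submatrix_succAbove_map_ne_zero h2 j
    exact ⟨Matrix.linearIndependent_rows_of_det_ne_zero hdet,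
      Matrix.span_rows_eq_top_of_det_ne_zero hdet⟩
end
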